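/- arXiv:1605.05002 — 6 statements merged into one kernel-verified Lean document; each statement's English description precedes it below -/
import Mathlib

section
/- Let g(p,x) = a·p²/x + b·p + c·x for x > 0 and g(0,0) = 0, defined on D = {(p,x) : x ∈ [0,1], x·p̲ ≤ p ≤ x·p̄}, with a > 0. Then g is the largest convex function on D that underestimates C(p,x) = a·p² + b·p + c·x on the set D ∩ {x ∈ {0,1}}; i.e., g is the convex envelope over the mixed-integer set {(p,x) : x ∈ {0,1}, x·p̲ ≤ p ≤ x·p̄}. -/
private lemma perskey (a p1 x1 p2 x2 s t : ℝ) (ha : 0 < a) (hx1 : 0 < x1) (hx2 : 0 < x2)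
    (hs : 0 ≤ s) (ht : 0 ≤ t) (hsum : 0 < s * x1 + t * x2) :
    a * (s * p1 + t * p2) ^ 2 / (s * x1 + t * x2) ≤
      s * (a * p1 ^ 2 / x1) + t * (a * p2 ^ 2 / x2) := by
  rw [div_le_iff₀ hsum,
    show s * (a * p1 ^ 2 / x1) + t * (a * p2 ^ 2 / x2)
      = (s * (a * p1 ^ 2) * x2 + t * (a * p2 ^ 2) * x1) / (x1 * x2) by field_simp,
    div_mul_eq_mul_div, le_div_iff₀ (by positivity)]
  nlinarith [mul_nonneg (mul_nonneg ha.le (mul_nonneg hs ht)) (sq_nonneg (p1 * x2 - p2 * x1))]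

private lemma sumpos (x1 x2 s t : ℝ) (hx1 : 0 < x1) (hx2 : 0 < x2)
    (hs : 0 ≤ s) (ht : 0 ≤ t) (hst : s + t = 1) : 0 < s * x1 + t * x2 := by
  rcases hs.eq_or_lt with h | h
  · have ht1 : t = 1 := by linarith
    rw [← h, ht1]; simpa using hx2
  · linarith [mul_pos h hx1, mul_nonneg ht hx2.le]

/-- The perspective function `g` is the convex envelope of the quadratic cost `C`
over the mixed-integer set `X = {(p,x) : x ∈ {0,1}, x·p̲ ≤ p ≤ x·p̄}`, i.e. the largest
convex function on `D = conv(X)` underestimating `C` on `X`. -/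
theorem stmt1 (a b c pl ph : ℝ) (ha : 0 < a) (hpl : 0 ≤ pl) (hph : pl ≤ ph)
    (X : Set (ℝ × ℝ)) (hX : X = {z | (z.2 = 0 ∨ z.2 = 1) ∧ z.2 * pl ≤ z.1 ∧ z.1 ≤ z.2 * ph})
    (D : Set (ℝ × ℝ)) (hD : D = {z | z.2 ∈ Set.Icc (0:ℝ) 1 ∧ z.2 * pl ≤ z.1 ∧ z.1 ≤ z.2 * ph})
    (g C : ℝ × ℝ → ℝ)
    (hg : g = fun z => if 0 < z.2 then a * z.1 ^ 2 / z.2 + b * z.1 + c * z.2 else 0)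
    (hC : C = fun z => a * z.1 ^ 2 + b * z.1 + c * z.2) :
    (ConvexOn ℝ D g ∧ ∀ z ∈ X, g z ≤ C z) ∧
      ∀ h : ℝ × ℝ → ℝ, ConvexOn ℝ D h → (∀ z ∈ X, h z ≤ C z) → ∀ z ∈ D, h z ≤ g z := by
  subst hX hD hg hC
  have hzero : ∀ z : ℝ × ℝ, z.2 = 0 → z.2 * pl ≤ z.1 → z.1 ≤ z.2 * ph → z.1 = 0 := by
    intro z h0 hl hr
    rw [h0] at hl hr
    simp at hl hr; linarith
  have hDconv : Convex ℝ {z : ℝ × ℝ | z.2 ∈ Set.Icc (0:ℝ) 1 ∧ z.2 * pl ≤ z.1 ∧ z.1 ≤ z.2 * ph} := by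
    intro z1 hz1 z2 hz2 s t hs ht hst
    obtain ⟨⟨h10, h11⟩, h1l, h1r⟩ := hz1
    obtain ⟨⟨h20, h21⟩, h2l, h2r⟩ := hz2
    refine ⟨⟨?_, ?_⟩, ?_, ?_⟩ <;>
      simp only [Prod.fst_add, Prod.snd_add, Prod.smul_fst, Prod.smul_snd, smul_eq_mul] <;>
      nlinarith [mul_le_mul_of_nonneg_left h1l hs, mul_le_mul_of_nonneg_left h2l ht,
        mul_le_mul_of_nonneg_left h1r hs, mul_le_mul_of_nonneg_left h2r ht,
        mul_nonneg hs h10, mul_nonneg ht h20, mul_le_mul_of_nonneg_left h11 hs,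
        mul_le_mul_of_nonneg_left h21 ht]
  refine ⟨⟨⟨hDconv, ?_⟩, ?_⟩, ?_⟩
  · -- convexity inequality for g
    intro z1 hz1 z2 hz2 s t hs ht hst
    obtain ⟨⟨h10, h11⟩, h1l, h1r⟩ := hz1
    obtain ⟨⟨h20, h21⟩, h2l, h2r⟩ := hz2
    simp only [Prod.fst_add, Prod.snd_add, Prod.smul_fst, Prod.smul_snd, smul_eq_mul]
    split_ifs with hP hQ hR hR2 hQ2 hR3 hR4
    · -- both positive
      nlinarith [perskey a z1.1 z1.2 z2.1 z2.2 s t ha hQ hR hs ht hP]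
    · -- x2 = 0
      have hx2 : z2.2 = 0 := le_antisymm (not_lt.1 hR) h20
      have hp2 : z2.1 = 0 := hzero z2 hx2 h2l h2r
      rw [hx2] at hP
      have hs0 : 0 < s := by
        by_contra hc
        push_neg at hc
        have hse : s = 0 := le_antisymm hc hs
        rw [hse] at hP
        simp at hP
      rw [hx2, hp2, show s * z1.1 + t * 0 = s * z1.1 by ring,
        show s * z1.2 + t * 0 = s * z1.2 by ring]
      apply le_of_eq
      have h1ne : z1.2 ≠ 0 := ne_of_gt hQ
      have hsne : s ≠ 0 := ne_of_gt hs0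
      field_simp
      ring
    · -- x1 = 0
      have hx1 : z1.2 = 0 := le_antisymm (not_lt.1 hQ) h10
      have hp1 : z1.1 = 0 := hzero z1 hx1 h1l h1r
      rw [hx1] at hP
      have ht0 : 0 < t := by
        by_contra hc
        push_neg at hc
        have hte : t = 0 := le_antisymm hc ht
        rw [hte] at hP
        simp at hP
      rw [hx1, hp1, show s * 0 + t * z2.1 = t * z2.1 by ring,
        show s * 0 + t * z2.2 = t * z2.2 by ring]
      apply le_of_eq
      have h2ne : z2.2 ≠ 0 := ne_of_gt hR2
      have htne : t ≠ 0 := ne_of_gt ht0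
      field_simp
      ring
    · -- both zero, contradiction with hP
      have hx1 : z1.2 = 0 := le_antisymm (not_lt.1 hQ) h10
      have hx2 : z2.2 = 0 := le_antisymm (not_lt.1 hR2) h20
      rw [hx1, hx2] at hP
      simp at hP
    · -- ¬P but both positive: contradiction
      exact absurd (sumpos z1.2 z2.2 s t hQ2 hR3 hs ht hst) hP
    · -- ¬P, x1 > 0, x2 = 0 : s = 0
      have hx2 : z2.2 = 0 := le_antisymm (not_lt.1 hR3) h20
      push_neg at hP
      rw [hx2] at hP
      have hs0 : s = 0 := by
        by_contra hc
        have hs' : 0 < s := hs.lt_of_ne (Ne.symm hc)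
        nlinarith [mul_pos hs' hQ2]
      rw [hs0]
      simp
    · -- ¬P, x1 = 0, x2 > 0 : t = 0
      have hx1 : z1.2 = 0 := le_antisymm (not_lt.1 hQ2) h10
      push_neg at hP
      rw [hx1] at hP
      have ht0 : t = 0 := by
        by_contra hc
        have ht' : 0 < t := ht.lt_of_ne (Ne.symm hc)
        nlinarith [mul_pos ht' hR4]
      rw [ht0]
      simp
    · simp
  · -- g ≤ C on X
    intro z hz
    obtain ⟨h01, hl, hr⟩ := hz
    rcases h01 with h0 | h0
    · have hp : z.1 = 0 := hzero z h0 hl hr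
      show (if 0 < z.2 then a * z.1 ^ 2 / z.2 + b * z.1 + c * z.2 else 0) ≤
        a * z.1 ^ 2 + b * z.1 + c * z.2
      rw [if_neg (by rw [h0]; exact lt_irrefl (0:ℝ)), hp, h0]
      simp
    · show (if 0 < z.2 then a * z.1 ^ 2 / z.2 + b * z.1 + c * z.2 else 0) ≤
        a * z.1 ^ 2 + b * z.1 + c * z.2
      rw [if_pos (by rw [h0]; norm_num), h0]
      simp
  · -- maximality
    intro h hconv hle z hz
    obtain ⟨⟨h0, h1⟩, hl, hr⟩ := hz
    rcases h0.eq_or_lt with hx | hx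
    · have hp : z.1 = 0 := hzero z hx.symm hl hr
      have h00 : h z ≤ 0 := by
        have h' := hle z ⟨Or.inl hx.symm, hl, hr⟩
        simp only at h'
        rw [hp, ← hx] at h'
        simpa using h'
      show h z ≤ if 0 < z.2 then a * z.1 ^ 2 / z.2 + b * z.1 + c * z.2 else 0
      rw [if_neg (by rw [← hx]; exact lt_irrefl (0:ℝ))]
      exact h00
    · -- z.2 > 0
      set w : ℝ × ℝ := (z.1 / z.2, 1) with hw
      have hwX : w ∈ {z : ℝ × ℝ | (z.2 = 0 ∨ z.2 = 1) ∧ z.2 * pl ≤ z.1 ∧ z.1 ≤ z.2 * ph} := by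
        refine ⟨Or.inr rfl, ?_, ?_⟩
        · simp only [hw, one_mul]
          rw [le_div_iff₀ hx]
          linarith
        · simp only [hw, one_mul]
          rw [div_le_iff₀ hx]
          linarith
      have hwD : w ∈ {z : ℝ × ℝ | z.2 ∈ Set.Icc (0:ℝ) 1 ∧ z.2 * pl ≤ z.1 ∧ z.1 ≤ z.2 * ph} :=
        ⟨⟨zero_le_one, le_refl 1⟩, hwX.2.1, hwX.2.2⟩
      have h0D : ((0:ℝ), (0:ℝ)) ∈
          {z : ℝ × ℝ | z.2 ∈ Set.Icc (0:ℝ) 1 ∧ z.2 * pl ≤ z.1 ∧ z.1 ≤ z.2 * ph} :=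
        ⟨⟨le_refl 0, zero_le_one⟩, by simp, by simp⟩
      have h0X : ((0:ℝ), (0:ℝ)) ∈
          {z : ℝ × ℝ | (z.2 = 0 ∨ z.2 = 1) ∧ z.2 * pl ≤ z.1 ∧ z.1 ≤ z.2 * ph} :=
        ⟨Or.inl rfl, by simp, by simp⟩
      have hzcomb : z.2 • w + (1 - z.2) • ((0:ℝ), (0:ℝ)) = z := by
        ext
        · simp only [hw, Prod.fst_add, Prod.smul_fst, smul_eq_mul]
          field_simp
          ring
        · simp only [hw, Prod.snd_add, Prod.smul_snd, smul_eq_mul]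
          ring
      have key := hconv.2 hwD h0D h0 (by linarith : (0:ℝ) ≤ 1 - z.2) (by ring)
      rw [hzcomb] at key
      simp only [smul_eq_mul] at key
      have hCw : h w ≤ a * (z.1 / z.2) ^ 2 + b * (z.1 / z.2) + c * 1 := by
        have := hle w hwX
        simpa [hw] using this
      have hC0 : h ((0:ℝ), (0:ℝ)) ≤ 0 := by
        have := hle _ h0X
        simpa using this
      have step1 : z.2 * h w ≤ z.2 * (a * (z.1 / z.2) ^ 2 + b * (z.1 / z.2) + c * 1) :=
        mul_le_mul_of_nonneg_left hCw h0
      have step2 : (1 - z.2) * h ((0:ℝ), (0:ℝ)) ≤ 0 := by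
        nlinarith [mul_nonneg (by linarith : (0:ℝ) ≤ 1 - z.2) (neg_nonneg.2 hC0)]
      have heq : z.2 * (a * (z.1 / z.2) ^ 2 + b * (z.1 / z.2) + c * 1)
          = a * z.1 ^ 2 / z.2 + b * z.1 + c * z.2 := by
        field_simp
      show h z ≤ if 0 < z.2 then a * z.1 ^ 2 / z.2 + b * z.1 + c * z.2 else 0
      rw [if_pos hx]
      linarith [key, step1, step2, heq]
end

section
/- Every extreme point of the polytope D_T(L,l) = {(x,u) ∈ ℝ^T × ℝ^{T−1} : Σ_{i=t−L+1}^{t} u_i ≤ x_t for t ∈ [L+1,T]; Σ_{i=t−l+1}^{t} u_i ≤ 1 − x_{t−l} for t ∈ [l+1,T]; u_t ≥ x_t − x_{t−1} for t ∈ [2,T]; u_t ≥ 0 for t ∈ [2,T]; 0 ≤ x_t ≤ 1} has all coordinates in {0,1}. -/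
/-- The minimum up/down time commitment polytope `D_T(L,l)`. The commitment vector `x = z.1`
is indexed by `t = 1, …, T` and the start-up vector `u = z.2` by `t = 2, …, T`;
coordinates outside these ranges are fixed to `0`. -/
def DT (T L l : ℕ) : Set ((ℕ → ℝ) × (ℕ → ℝ)) :=
  {z | (∀ t, t ∉ Finset.Icc 1 T → z.1 t = 0) ∧
       (∀ t, t ∉ Finset.Icc 2 T → z.2 t = 0) ∧
       (∀ t ∈ Finset.Icc (L + 1) T, ∑ i ∈ Finset.Icc (t - L + 1) t, z.2 i ≤ z.1 t) ∧
       (∀ t ∈ Finset.Icc (l + 1) T, ∑ i ∈ Finset.Icc (t - l + 1) t, z.2 i ≤ 1 - z.1 (t - l)) ∧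
       (∀ t ∈ Finset.Icc 2 T, z.1 t - z.1 (t - 1) ≤ z.2 t) ∧
       (∀ t ∈ Finset.Icc 2 T, 0 ≤ z.2 t) ∧
       (∀ t ∈ Finset.Icc 1 T, z.1 t ∈ Set.Icc (0:ℝ) 1)}

/-- Distance from a real number to the nearest integer. -/
noncomputable def gg (y : ℝ) : ℝ := |y - round y|

lemma gg_nonneg (y : ℝ) : 0 ≤ gg y := abs_nonneg _

lemma gg_le (y : ℝ) (m : ℤ) : gg y ≤ |y - m| := round_le y m

lemma gg_intCast (n : ℤ) : gg (n : ℝ) = 0 := by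
  have h := gg_le (n : ℝ) n
  have h2 := gg_nonneg (n : ℝ)
  simp at h
  linarith

lemma gg_eq_zero {y : ℝ} (h : gg y = 0) : ∃ n : ℤ, y = (n : ℝ) := by
  refine ⟨round y, ?_⟩
  have : y - round y = 0 := abs_eq_zero.mp h
  linarith

lemma gg_neg (y : ℝ) : gg (-y) = gg y := by
  have h1 : gg (-y) ≤ gg y := by
    calc gg (-y) ≤ |(-y) - (((-round y) : ℤ) : ℝ)| := gg_le (-y) (-round y)
      _ = |y - (round y : ℝ)| := by
          push_cast
          rw [show (-y - -(round y : ℝ)) = -(y - (round y : ℝ)) by ring, abs_neg]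
      _ = gg y := rfl
  have h2 : gg y ≤ gg (-y) := by
    calc gg y ≤ |y - (((-round (-y)) : ℤ) : ℝ)| := gg_le y (-round (-y))
      _ = |(-y) - (round (-y) : ℝ)| := by
          push_cast
          rw [show (y - -(round (-y) : ℝ)) = -(-y - (round (-y) : ℝ)) by ring, abs_neg]
      _ = gg (-y) := rfl
  linarith

lemma gg_triangle (a b : ℝ) : gg a ≤ gg (a - b) + gg b := by
  have h := gg_le a (round (a - b) + round b)
  calc gg a ≤ |a - ((round (a - b) + round b : ℤ) : ℝ)| := h
    _ = |((a - b) - round (a - b)) + (b - round b)| := by push_cast; ring_nf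
    _ ≤ |(a - b) - round (a - b)| + |b - round b| := abs_add_le _ _
    _ = gg (a - b) + gg b := rfl

lemma gg_abs_sub (a b : ℝ) : |gg a - gg b| ≤ gg (a - b) := by
  have h1 := gg_triangle a b
  have h2 := gg_triangle b a
  have h3 : gg (b - a) = gg (a - b) := by rw [← gg_neg (b - a)]; ring_nf
  rw [abs_sub_le_iff]
  constructor <;> linarith

/-- The key perturbation lemma: if `a - b ≤ c` with `c` an integer, then perturbing `a` and
`b` by `σ` times their distances to `ℤ` (with `|σ| ≤ 1`) preserves the inequality. -/
lemma key (σ a b : ℝ) (c : ℤ) (hσ : |σ| ≤ 1) (h : a - b ≤ (c : ℝ)) :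
    (a + σ * gg a) - (b + σ * gg b) ≤ (c : ℝ) := by
  have h1 : gg (a - b) ≤ (c : ℝ) - (a - b) := by
    have := gg_le (a - b) c
    have habs : |a - b - (c : ℝ)| = (c : ℝ) - (a - b) := by
      rw [abs_of_nonpos (by linarith)]; ring
    linarith
  have h2 : |gg a - gg b| ≤ gg (a - b) := gg_abs_sub a b
  have h3 : σ * (gg a - gg b) ≤ |gg a - gg b| := by
    calc σ * (gg a - gg b) ≤ |σ * (gg a - gg b)| := le_abs_self _
      _ = |σ| * |gg a - gg b| := abs_mul _ _
      _ ≤ 1 * |gg a - gg b| := by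
          exact mul_le_mul_of_nonneg_right hσ (abs_nonneg _)
      _ = |gg a - gg b| := one_mul _
  nlinarith

lemma sum_Ioc_tel (f : ℕ → ℝ) : ∀ a t : ℕ, a ≤ t →
    ∑ i ∈ Finset.Ioc a t, (f i - f (i - 1)) = f t - f a := by
  intro a t h
  induction t, h using Nat.le_induction with
  | base => simp
  | succ t ht ih =>
      rw [Finset.sum_Ioc_succ_top (by omega : a ≤ t), ih]
      simp only [Nat.add_sub_cancel]
      ring

/-- Every extreme point of the minimum up/down time polytope `D_T(L,l)` has all
coordinates in `{0,1}`. -/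
theorem stmt4 (T L l : ℕ) (hT : 2 ≤ T) (hL : L ≤ T - 1) (hl : l ≤ T - 1) :
    ∀ z ∈ (DT T L l).extremePoints ℝ,
      (∀ t, z.1 t = 0 ∨ z.1 t = 1) ∧ ∀ t, z.2 t = 0 ∨ z.2 t = 1 := by
  intro z hz
  rw [mem_extremePoints] at hz
  obtain ⟨hzmem, hext⟩ := hz
  obtain ⟨h1, h2, h3, h4, h5, h6, h7⟩ := hzmem
  -- prefix sums
  set U : ℕ → ℝ := fun t => ∑ i ∈ Finset.Ioc 1 t, z.2 i with hUdef
  set V : ℕ → ℝ := fun t => U t - z.1 t with hVdef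
  -- the sums appearing in the constraints are increments of U
  have hIcc : ∀ a t : ℕ, Finset.Icc (a + 1) t = Finset.Ioc a t := fun a t => Finset.Icc_add_one_left_eq_Ioc a t
  have hsum : ∀ a t : ℕ, 1 ≤ a → a ≤ t → ∑ i ∈ Finset.Ioc a t, z.2 i = U t - U a := by
    intro a t ha hat
    have := Finset.sum_Ioc_consecutive z.2 ha hat
    simp only [hUdef]
    linarith [this]
  have hU1 : U 1 = 0 := by simp [hUdef]
  -- the single-u identity
  have husum : ∀ t : ℕ, 2 ≤ t → z.2 t = U t - U (t - 1) := by
    intro t ht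
    have h' := hsum (t - 1) t (by omega) (by omega)
    rw [show Finset.Ioc (t-1) t = {t} by
      rw [← hIcc, show t - 1 + 1 = t by omega, Finset.Icc_self]] at h'
    simpa using h'
  -- perturbation directions
  set D1 : ℕ → ℝ := fun t => if t ∈ Finset.Icc 1 T then gg (U t) - gg (V t) else 0 with hD1
  set D2 : ℕ → ℝ := fun t => if t ∈ Finset.Icc 2 T then gg (U t) - gg (U (t - 1)) else 0 with hD2
  -- the perturbed points are in DT
  have hw : ∀ σ : ℝ, |σ| ≤ 1 →
      ((fun t => z.1 t + σ * D1 t, fun t => z.2 t + σ * D2 t) : (ℕ → ℝ) × (ℕ → ℝ)) ∈ DT T L l := by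
    intro σ hσ
    have hwin : ∀ a t : ℕ, 1 ≤ a → a ≤ t → t ≤ T →
        ∑ i ∈ Finset.Ioc a t, (z.2 i + σ * D2 i)
          = (U t - U a) + σ * (gg (U t) - gg (U a)) := by
      intro a t ha hat htT
      rw [Finset.sum_add_distrib, hsum a t ha hat, ← Finset.mul_sum]
      congr 1
      have : ∑ i ∈ Finset.Ioc a t, D2 i
          = ∑ i ∈ Finset.Ioc a t, (gg (U i) - gg (U (i - 1))) := by
        apply Finset.sum_congr rfl
        intro i hi
        rw [Finset.mem_Ioc] at hi
        have hmem : i ∈ Finset.Icc 2 T := Finset.mem_Icc.mpr ⟨by omega, by omega⟩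
        show (if i ∈ Finset.Icc 2 T then gg (U i) - gg (U (i - 1)) else 0)
            = gg (U i) - gg (U (i - 1))
        rw [if_pos hmem]
      rw [this, sum_Ioc_tel (fun i => gg (U i)) a t hat]
    refine ⟨?_, ?_, ?_, ?_, ?_, ?_, ?_⟩
    · intro t ht
      simp only [hD1, if_neg ht]
      rw [h1 t ht]; ring
    · intro t ht
      simp only [hD2, if_neg ht]
      rw [h2 t ht]; ring
    · intro t ht
      rw [Finset.mem_Icc] at ht
      have h3' := h3 t (Finset.mem_Icc.mpr ht)
      rw [hIcc] at h3' ⊢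
      rw [hsum (t - L) t (by omega) (by omega)] at h3'
      rw [hwin (t - L) t (by omega) (by omega) ht.2]
      have hmem : t ∈ Finset.Icc 1 T := Finset.mem_Icc.mpr ⟨by omega, ht.2⟩
      have hVt : V t = U t - z.1 t := rfl
      simp only [hD1]
      rw [if_pos hmem]
      have hk := key σ (V t) (U (t - L)) 0 hσ (by rw [hVt]; push_cast; linarith)
      push_cast at hk
      linarith
    · intro t ht
      rw [Finset.mem_Icc] at ht
      have h4' := h4 t (Finset.mem_Icc.mpr ht)
      rw [hIcc] at h4' ⊢
      rw [hsum (t - l) t (by omega) (by omega)] at h4'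
      rw [hwin (t - l) t (by omega) (by omega) ht.2]
      have hmem : t - l ∈ Finset.Icc 1 T := Finset.mem_Icc.mpr ⟨by omega, by omega⟩
      have hVs : V (t - l) = U (t - l) - z.1 (t - l) := rfl
      simp only [hD1]
      rw [if_pos hmem]
      have hk := key σ (U t) (V (t - l)) 1 hσ (by rw [hVs]; push_cast; linarith)
      push_cast at hk
      linarith
    · intro t ht
      rw [Finset.mem_Icc] at ht
      have h5' := h5 t (Finset.mem_Icc.mpr ht)
      have hu := husum t ht.1
      have hm1 : t ∈ Finset.Icc 1 T := Finset.mem_Icc.mpr ⟨by omega, ht.2⟩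
      have hm0 : t - 1 ∈ Finset.Icc 1 T := Finset.mem_Icc.mpr ⟨by omega, by omega⟩
      have hm2 : t ∈ Finset.Icc 2 T := Finset.mem_Icc.mpr ht
      have hVt : V t = U t - z.1 t := rfl
      have hVs : V (t - 1) = U (t - 1) - z.1 (t - 1) := rfl
      simp only [hD1, hD2]
      rw [if_pos hm1, if_pos hm0, if_pos hm2]
      have hk := key σ (V (t - 1)) (V t) 0 hσ
        (by rw [hVt, hVs]; push_cast; linarith)
      rw [hVt, hVs] at hk
      push_cast at hk
      linarith
    · intro t ht
      rw [Finset.mem_Icc] at ht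
      have h6' := h6 t (Finset.mem_Icc.mpr ht)
      have hu := husum t ht.1
      have hm2 : t ∈ Finset.Icc 2 T := Finset.mem_Icc.mpr ht
      simp only [hD2]
      rw [if_pos hm2]
      have hk := key σ (U (t - 1)) (U t) 0 hσ (by push_cast; linarith)
      push_cast at hk
      linarith
    · intro t ht
      rw [Finset.mem_Icc] at ht
      have h7' := h7 t (Finset.mem_Icc.mpr ht)
      rw [Set.mem_Icc] at h7'
      rw [Set.mem_Icc]
      have hm1 : t ∈ Finset.Icc 1 T := Finset.mem_Icc.mpr ht
      have hVt : V t = U t - z.1 t := rfl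
      simp only [hD1]
      rw [if_pos hm1]
      have hk1 := key σ (V t) (U t) 0 hσ (by rw [hVt]; push_cast; linarith)
      have hk2 := key σ (U t) (V t) 1 hσ (by rw [hVt]; push_cast; linarith)
      rw [hVt] at hk1 hk2
      push_cast at hk1 hk2
      constructor <;> linarith
  -- apply extremeness to the two perturbed points
  have hp := hw 1 (by norm_num)
  have hq := hw (-1) (by norm_num)
  have hmid : ((1:ℝ)/2) • ((fun t => z.1 t + 1 * D1 t, fun t => z.2 t + 1 * D2 t) : (ℕ → ℝ) × (ℕ → ℝ))
      + ((1:ℝ)/2) • ((fun t => z.1 t + (-1) * D1 t, fun t => z.2 t + (-1) * D2 t) : (ℕ → ℝ) × (ℕ → ℝ)) = z := by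
    refine Prod.ext ?_ ?_ <;> funext t <;>
      simp [Prod.smul_fst, Prod.smul_snd, Pi.smul_apply, Pi.add_apply, smul_eq_mul] <;> ring
  have hseg : z ∈ openSegment ℝ
      ((fun t => z.1 t + 1 * D1 t, fun t => z.2 t + 1 * D2 t) : (ℕ → ℝ) × (ℕ → ℝ))
      ((fun t => z.1 t + (-1) * D1 t, fun t => z.2 t + (-1) * D2 t) : (ℕ → ℝ) × (ℕ → ℝ)) :=
    ⟨1/2, 1/2, by norm_num, by norm_num, by norm_num, hmid⟩
  obtain ⟨heq, -⟩ := hext _ hp _ hq hseg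
  have hD1z : ∀ t, D1 t = 0 := by
    intro t
    have := congrFun (congrArg Prod.fst heq) t
    simp only at this
    linarith [this]
  have hD2z : ∀ t, D2 t = 0 := by
    intro t
    have := congrFun (congrArg Prod.snd heq) t
    simp only at this
    linarith [this]
  -- all U t, for 1 ≤ t ≤ T, are integral
  have hUint : ∀ t : ℕ, 1 ≤ t → t ≤ T → gg (U t) = 0 := by
    intro t ht
    induction t, ht using Nat.le_induction with
    | base => intro _; rw [hU1]; exact_mod_cast gg_intCast 0
    | succ t ht ih =>
        intro htT
        have h' := hD2z (t + 1)
        have hmem : t + 1 ∈ Finset.Icc 2 T := Finset.mem_Icc.mpr ⟨by omega, htT⟩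
        simp only [hD2] at h'
        rw [if_pos hmem] at h'
        simp only [Nat.add_sub_cancel] at h'
        have := ih (by omega)
        linarith
  have hVint : ∀ t : ℕ, 1 ≤ t → t ≤ T → gg (V t) = 0 := by
    intro t ht htT
    have h' := hD1z t
    have hmem : t ∈ Finset.Icc 1 T := Finset.mem_Icc.mpr ⟨ht, htT⟩
    simp only [hD1] at h'
    rw [if_pos hmem] at h'
    have := hUint t ht htT
    linarith
  -- x coordinates are 0 or 1
  have hx : ∀ t, z.1 t = 0 ∨ z.1 t = 1 := by
    intro t
    by_cases ht : t ∈ Finset.Icc 1 T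
    · rw [Finset.mem_Icc] at ht
      obtain ⟨n, hn⟩ := gg_eq_zero (hUint t ht.1 ht.2)
      obtain ⟨m, hm⟩ := gg_eq_zero (hVint t ht.1 ht.2)
      have hVt : V t = U t - z.1 t := rfl
      have hxval : z.1 t = ((n - m : ℤ) : ℝ) := by
        push_cast
        rw [← hn, ← hm]
        linarith [hVt]
      have h7' := h7 t (Finset.mem_Icc.mpr ht)
      rw [Set.mem_Icc, hxval] at h7'
      have hk0 : (0 : ℤ) ≤ n - m := by exact_mod_cast h7'.1
      have hk1 : (n - m : ℤ) ≤ 1 := by exact_mod_cast h7'.2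
      rw [hxval]
      rcases (by omega : n - m = 0 ∨ n - m = 1) with h | h <;> rw [h] <;> simp
    · left; exact h1 t ht
  refine ⟨hx, ?_⟩
  -- u coordinates are 0 or 1
  intro t
  by_cases ht : t ∈ Finset.Icc 2 T
  · rw [Finset.mem_Icc] at ht
    obtain ⟨n, hn⟩ := gg_eq_zero (hUint t (by omega) ht.2)
    obtain ⟨m, hm⟩ := gg_eq_zero (hUint (t - 1) (by omega) (by omega))
    have huval : z.2 t = ((n - m : ℤ) : ℝ) := by
      rw [husum t ht.1, hn, hm]; push_cast; ring
    have h6' := h6 t (Finset.mem_Icc.mpr ht)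
    rw [huval] at h6'
    have hk0 : (0 : ℤ) ≤ n - m := by exact_mod_cast h6'
    by_cases hk1 : n - m ≤ 1
    · rw [huval]
      rcases (by omega : n - m = 0 ∨ n - m = 1) with h | h <;> rw [h] <;> simp
    -- impossible: z.2 t ≥ 2, a single-coordinate perturbation stays in DT
    · exfalso
      have hu2 : (2 : ℝ) ≤ z.2 t := by
        rw [huval]; exact_mod_cast (by omega : (2:ℤ) ≤ n - m)
      set e : ℕ → ℝ := fun i => if i = t then (1:ℝ) else 0 with he
      have hw2 : ∀ σ : ℝ, |σ| ≤ 1 →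
          ((z.1, fun i => z.2 i + σ * e i) : (ℕ → ℝ) × (ℕ → ℝ)) ∈ DT T L l := by
        intro σ hσ
        have hσ1 : -1 ≤ σ ∧ σ ≤ 1 := abs_le.mp hσ
        refine ⟨h1, ?_, ?_, ?_, ?_, ?_, h7⟩
        · intro i hi
          have hne : i ≠ t := by
            rintro rfl
            exact hi (Finset.mem_Icc.mpr ht)
          simp only [he, if_neg hne]
          rw [h2 i hi]; ring
        · intro s hs
          rw [Finset.mem_Icc] at hs
          have h3' := h3 s (Finset.mem_Icc.mpr hs)
          by_cases htw : t ∈ Finset.Icc (s - L + 1) s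
          · exfalso
            have hbig : z.2 t ≤ ∑ i ∈ Finset.Icc (s - L + 1) s, z.2 i := by
              apply Finset.single_le_sum (f := z.2) _ htw
              intro i hi
              rw [Finset.mem_Icc] at hi
              exact h6 i (Finset.mem_Icc.mpr ⟨by omega, by omega⟩)
            have hx1 : z.1 s ≤ 1 :=
              (Set.mem_Icc.mp (h7 s (Finset.mem_Icc.mpr ⟨by omega, hs.2⟩))).2
            linarith
          · have hcongr : ∑ i ∈ Finset.Icc (s - L + 1) s, (z.2 i + σ * e i)
                = ∑ i ∈ Finset.Icc (s - L + 1) s, z.2 i := by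
              apply Finset.sum_congr rfl
              intro i hi
              have hne : i ≠ t := by rintro rfl; exact htw hi
              simp only [he, if_neg hne]; ring
            rw [hcongr]; exact h3'
        · intro s hs
          rw [Finset.mem_Icc] at hs
          have h4' := h4 s (Finset.mem_Icc.mpr hs)
          by_cases htw : t ∈ Finset.Icc (s - l + 1) s
          · exfalso
            have hbig : z.2 t ≤ ∑ i ∈ Finset.Icc (s - l + 1) s, z.2 i := by
              apply Finset.single_le_sum (f := z.2) _ htw
              intro i hi
              rw [Finset.mem_Icc] at hi
              exact h6 i (Finset.mem_Icc.mpr ⟨by omega, by omega⟩)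
            have hx0 : 0 ≤ z.1 (s - l) :=
              (Set.mem_Icc.mp (h7 (s - l) (Finset.mem_Icc.mpr ⟨by omega, by omega⟩))).1
            linarith
          · have hcongr : ∑ i ∈ Finset.Icc (s - l + 1) s, (z.2 i + σ * e i)
                = ∑ i ∈ Finset.Icc (s - l + 1) s, z.2 i := by
              apply Finset.sum_congr rfl
              intro i hi
              have hne : i ≠ t := by rintro rfl; exact htw hi
              simp only [he, if_neg hne]; ring
            rw [hcongr]; exact h4'
        · intro s hs
          have h5' := h5 s hs
          rw [Finset.mem_Icc] at hs
          by_cases hst : s = t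
          · subst hst
            simp only [he, if_pos rfl]
            have hx1 : z.1 s ≤ 1 :=
              (Set.mem_Icc.mp (h7 s (Finset.mem_Icc.mpr ⟨by omega, hs.2⟩))).2
            have hx0 : 0 ≤ z.1 (s - 1) :=
              (Set.mem_Icc.mp (h7 (s - 1) (Finset.mem_Icc.mpr ⟨by omega, by omega⟩))).1
            nlinarith [hσ1.1, hσ1.2]
          · simp only [he, if_neg hst]
            calc z.1 s - z.1 (s - 1) ≤ z.2 s := h5'
              _ = z.2 s + σ * 0 := by ring
        · intro s hs
          have h6'' := h6 s hs
          by_cases hst : s = t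
          · subst hst
            simp only [he, if_pos rfl]
            nlinarith [hσ1.1]
          · simp only [he, if_neg hst]; linarith
      have hp2 := hw2 1 (by norm_num)
      have hq2 := hw2 (-1) (by norm_num)
      have hmid2 : ((1:ℝ)/2) • ((z.1, fun i => z.2 i + 1 * e i) : (ℕ → ℝ) × (ℕ → ℝ))
          + ((1:ℝ)/2) • ((z.1, fun i => z.2 i + (-1) * e i) : (ℕ → ℝ) × (ℕ → ℝ)) = z := by
        refine Prod.ext ?_ ?_ <;> funext i <;>
          simp [Prod.smul_fst, Prod.smul_snd, Pi.smul_apply, Pi.add_apply, smul_eq_mul] <;> ring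
      have hseg2 : z ∈ openSegment ℝ
          ((z.1, fun i => z.2 i + 1 * e i) : (ℕ → ℝ) × (ℕ → ℝ))
          ((z.1, fun i => z.2 i + (-1) * e i) : (ℕ → ℝ) × (ℕ → ℝ)) :=
        ⟨1/2, 1/2, by norm_num, by norm_num, by norm_num, hmid2⟩
      obtain ⟨heq2, -⟩ := hext _ hp2 _ hq2 hseg2
      have hcontra := congrFun (congrArg Prod.snd heq2) t
      simp only [he, if_pos rfl] at hcontra
      linarith [hcontra]
  · left; exact h2 t ht
end

section
/- Let X = {(p,x,u) ∈ ℝ^T × {0,1}^T × {0,1}^{T−1} : (x,u) ∈ D, x_t·p̲ ≤ p_t ≤ x_t·p̄ for all t}, where D is a set of binary vectors whose convex hull is an integral polytope P described by a system of linear inequalities. Then conv(X) = {(p,x,u) ∈ ℝ^T × ℝ^T × ℝ^{T−1} : (x,u) ∈ P, x_t·p̲ ≤ p_t ≤ x_t·p̄ for all t}. -/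
/-- Appending the variable bounds `x_t·p̲ ≤ p_t ≤ x_t·p̄` to a set `D` of binary
commitment/start-up decisions: the convex hull of the resulting mixed-integer set is obtained
by replacing `D` with its convex hull and keeping the same bounds. -/
theorem stmt6 (T m : ℕ) (pl ph : ℝ) (hpl : 0 ≤ pl) (hph : pl ≤ ph)
    (D : Set ((Fin T → ℝ) × (Fin m → ℝ)))
    (hD : ∀ z ∈ D, (∀ t, z.1 t = 0 ∨ z.1 t = 1) ∧ ∀ t, z.2 t = 0 ∨ z.2 t = 1) :
    convexHull ℝ {z : (Fin T → ℝ) × (Fin T → ℝ) × (Fin m → ℝ) |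
        (z.2.1, z.2.2) ∈ D ∧ ∀ t, z.2.1 t * pl ≤ z.1 t ∧ z.1 t ≤ z.2.1 t * ph} =
      {z : (Fin T → ℝ) × (Fin T → ℝ) × (Fin m → ℝ) |
        (z.2.1, z.2.2) ∈ convexHull ℝ D ∧ ∀ t, z.2.1 t * pl ≤ z.1 t ∧ z.1 t ≤ z.2.1 t * ph} := by
  apply Set.Subset.antisymm
  · apply convexHull_min
    · intro z hz
      exact ⟨subset_convexHull ℝ D hz.1, hz.2⟩
    · intro z hz z' hz' a b ha hb hab
      simp only [Set.mem_setOf_eq, Prod.mk.eta] at hz hz' ⊢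
      constructor
      · have := (convex_convexHull ℝ D) hz.1 hz'.1 ha hb hab
        simpa using this
      · intro t
        have h1 := (hz.2 t).1
        have h2 := (hz.2 t).2
        have h3 := (hz'.2 t).1
        have h4 := (hz'.2 t).2
        have e1 : (a • z + b • z').2.1 t = a * z.2.1 t + b * z'.2.1 t := rfl
        have e2 : (a • z + b • z').1 t = a * z.1 t + b * z'.1 t := rfl
        rw [e1, e2]
        constructor
        · nlinarith [mul_le_mul_of_nonneg_left h1 ha, mul_le_mul_of_nonneg_left h3 hb]
        · nlinarith [mul_le_mul_of_nonneg_left h2 ha, mul_le_mul_of_nonneg_left h4 hb]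
  · intro z hz
    obtain ⟨hxu, hb⟩ := hz
    rw [Prod.mk.eta, convexHull_eq] at hxu
    obtain ⟨ι, s, w, f, hw0, hw1, hfD, hcm⟩ := hxu
    set s' : Finset ι := {i ∈ s | w i ≠ 0} with hs'
    have hsub : s' ⊆ s := Finset.filter_subset _ _
    have hw1' : ∑ i ∈ s', w i = 1 := by
      rw [hs', Finset.sum_filter_ne_zero]; exact hw1
    have hpos : ∀ i ∈ s', 0 < w i := by
      intro i hi
      rw [hs', Finset.mem_filter] at hi
      exact lt_of_le_of_ne (hw0 i hi.1) (Ne.symm hi.2)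
    have hcm' : ∑ i ∈ s', w i • f i = z.2 := by
      rw [← Finset.centerMass_eq_of_sum_1 _ _ hw1', hs', Finset.centerMass_filter_ne_zero, hcm]
    -- componentwise equalities
    have hx : ∀ t, z.2.1 t = ∑ i ∈ s', w i * (f i).1 t := by
      intro t
      have := congrArg (fun v => v.1 t) hcm'
      rw [← this, Prod.fst_sum, Finset.sum_apply]
      rfl
    have hbin : ∀ i ∈ s', ∀ t, (f i).1 t = 0 ∨ (f i).1 t = 1 := by
      intro i hi t
      exact (hD (f i) (hfD i (hsub hi))).1 t
    have hnneg : ∀ i ∈ s', ∀ t, 0 ≤ (f i).1 t := by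
      intro i hi t
      rcases hbin i hi t with h | h <;> rw [h] <;> norm_num
    -- x t = 0 forces all components zero
    have hzero : ∀ t, z.2.1 t = 0 → ∀ i ∈ s', (f i).1 t = 0 := by
      intro t ht i hi
      have hsum0 : ∑ j ∈ s', w j * (f j).1 t = 0 := by rw [← hx t]; exact ht
      have hterm : w i * (f i).1 t = 0 := by
        have := (Finset.sum_eq_zero_iff_of_nonneg (fun j hj =>
          mul_nonneg (hpos j hj).le (hnneg j hj t))).mp hsum0 i hi
        exact this
      rcases mul_eq_zero.mp hterm with h | h
      · exact absurd h (hpos i hi).ne'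
      · exact h
    -- positive component lower bound
    have hxpos : ∀ i ∈ s', ∀ t, (f i).1 t = 1 → 0 < z.2.1 t := by
      intro i hi t h1
      have : w i * (f i).1 t ≤ ∑ j ∈ s', w j * (f j).1 t :=
        Finset.single_le_sum (fun j hj => mul_nonneg (hpos j hj).le (hnneg j hj t)) hi
      rw [h1, mul_one] at this
      rw [hx t]
      exact lt_of_lt_of_le (hpos i hi) this
    set g : ι → (Fin T → ℝ) × (Fin T → ℝ) × (Fin m → ℝ) :=
      fun i => (fun t => z.1 t / z.2.1 t * (f i).1 t, f i) with hg
    have hgmem : ∀ i ∈ s', g i ∈ {z : (Fin T → ℝ) × (Fin T → ℝ) × (Fin m → ℝ) |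
        (z.2.1, z.2.2) ∈ D ∧ ∀ t, z.2.1 t * pl ≤ z.1 t ∧ z.1 t ≤ z.2.1 t * ph} := by
      intro i hi
      refine ⟨by simpa [hg] using hfD i (hsub hi), ?_⟩
      intro t
      rcases hbin i hi t with h | h
      · simp [hg, h]
      · have hxt : 0 < z.2.1 t := hxpos i hi t h
        have hl : z.2.1 t * pl ≤ z.1 t := (hb t).1
        have hr : z.1 t ≤ z.2.1 t * ph := (hb t).2
        have hld : pl ≤ z.1 t / z.2.1 t := (le_div_iff₀ hxt).mpr (by linarith)
        have hrd : z.1 t / z.2.1 t ≤ ph := (div_le_iff₀ hxt).mpr (by linarith)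
        simp only [hg, h, mul_one]
        constructor
        · linarith
        · linarith
    have hcmg : ∑ i ∈ s', w i • g i = z := by
      apply Prod.ext
      · funext t
        rw [Prod.fst_sum, Finset.sum_apply]
        by_cases hxt : z.2.1 t = 0
        · have hp0 : z.1 t = 0 := by
            have h1 := (hb t).1
            have h2 := (hb t).2
            rw [hxt] at h1 h2
            linarith
          rw [hp0]
          apply Finset.sum_eq_zero
          intro i hi
          have := hzero t hxt i hi
          simp [hg, this]
        · have : ∀ i ∈ s', (w i • g i).1 t = z.1 t / z.2.1 t * (w i * (f i).1 t) := by
            intro i hi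
            simp only [hg, Prod.smul_fst, Pi.smul_apply, smul_eq_mul]
            ring
          rw [Finset.sum_congr rfl this, ← Finset.mul_sum, ← hx t,
            div_mul_cancel₀ _ hxt]
      · have : ∀ i ∈ s', (w i • g i).2 = w i • f i := fun i hi => rfl
        calc (∑ i ∈ s', w i • g i).2 = ∑ i ∈ s', (w i • g i).2 := Prod.snd_sum
          _ = ∑ i ∈ s', w i • f i := Finset.sum_congr rfl this
          _ = z.2 := hcm'
    have := Finset.centerMass_mem_convexHull s' (fun i hi => (hpos i hi).le)
      (by rw [hw1']; norm_num) hgmem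
    rwa [Finset.centerMass_eq_of_sum_1 _ _ hw1', hcmg] at this
end

section
/- Every extreme point of the polytope C = {(p,x,u) ∈ ℝ^T × ℝ^T × ℝ^{T−1} : (x,u) ∈ D_T(L,l), x_t·p̲ ≤ p_t ≤ x_t·p̄ for all t ∈ [1,T]} has binary values for all commitment variables x_t and all start-up variables u_t. -/
/-- The commitment–dispatch polytope: `z = (p, x, u)` with `(x,u) ∈ D_T(L,l)` and
`x_t·p̲ ≤ p_t ≤ x_t·p̄` for `t ∈ [1,T]`. -/
def CP (T L l : ℕ) (pl ph : ℝ) : Set ((ℕ → ℝ) × (ℕ → ℝ) × (ℕ → ℝ)) :=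
  {z | (z.2.1, z.2.2) ∈ DT T L l ∧ (∀ t, t ∉ Finset.Icc 1 T → z.1 t = 0) ∧
       ∀ t ∈ Finset.Icc 1 T, z.2.1 t * pl ≤ z.1 t ∧ z.1 t ≤ z.2.1 t * ph}

/-- Assuming `D_T(L,l)` is integral, every extreme point of the commitment–dispatch
polytope has binary commitment and start-up variables. -/
theorem stmt7 (T L l : ℕ) (hT : 2 ≤ T) (hL : L ≤ T - 1) (hl : l ≤ T - 1)
    (pl ph : ℝ) (hpl : 0 ≤ pl) (hph : pl ≤ ph)
    (hint : ∀ z ∈ (DT T L l).extremePoints ℝ,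
      (∀ t, z.1 t = 0 ∨ z.1 t = 1) ∧ ∀ t, z.2 t = 0 ∨ z.2 t = 1) :
    ∀ z ∈ (CP T L l pl ph).extremePoints ℝ,
      (∀ t, z.2.1 t = 0 ∨ z.2.1 t = 1) ∧ ∀ t, z.2.2 t = 0 ∨ z.2.2 t = 1 := by
  rintro z ⟨hzC, hext⟩
  obtain ⟨hxuD, hp0, hpbd⟩ := hzC
  obtain ⟨hx0, hu0, h3, h4, h5, h6, hx01⟩ := hxuD
  have hxnn : ∀ t, 0 ≤ z.2.1 t := by
    intro t
    by_cases ht : t ∈ Finset.Icc 1 T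
    · exact (hx01 t ht).1
    · rw [hx0 t ht]
  have hpz : ∀ t, z.2.1 t = 0 → z.1 t = 0 := by
    intro t h
    by_cases ht : t ∈ Finset.Icc 1 T
    · have hb := hpbd t ht
      rw [h] at hb
      simp only [zero_mul] at hb
      linarith [hb.1, hb.2]
    · exact hp0 t ht
  set c : ℕ → ℝ := fun t => if z.2.1 t = 0 then pl else z.1 t / z.2.1 t with hc
  have hcb : ∀ t ∈ Finset.Icc 1 T, pl ≤ c t ∧ c t ≤ ph := by
    intro t ht
    simp only [hc]
    by_cases h : z.2.1 t = 0
    · simp [h, hph]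
    · have hpos : 0 < z.2.1 t := lt_of_le_of_ne (hxnn t) (Ne.symm h)
      have hb := hpbd t ht
      simp only [h, if_false]
      constructor
      · rw [le_div_iff₀ hpos]; linarith [hb.1]
      · rw [div_le_iff₀ hpos]; linarith [hb.2]
  have key : (z.2.1, z.2.2) ∈ (DT T L l).extremePoints ℝ := by
    refine ⟨⟨hx0, hu0, h3, h4, h5, h6, hx01⟩, ?_⟩
    rintro w1 hw1 w2 hw2 ⟨a, b, ha, hb, hab, hsum⟩
    set p1 : ℕ → ℝ := fun t => w1.1 t * c t with hp1
    set p2 : ℕ → ℝ := fun t => w2.1 t * c t with hp2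
    obtain ⟨hw1x0, hw1b, hw1c, hw1d, hw1e, hw1f, hw1x01⟩ := hw1
    obtain ⟨hw2x0, hw2b, hw2c, hw2d, hw2e, hw2f, hw2x01⟩ := hw2
    have hxeq : ∀ t, a * w1.1 t + b * w2.1 t = z.2.1 t := by
      intro t
      have := congrArg Prod.fst hsum
      exact congrFun this t
    have hueq : ∀ t, a * w1.2 t + b * w2.2 t = z.2.2 t := by
      intro t
      have := congrArg Prod.snd hsum
      exact congrFun this t
    have hmem1 : (p1, w1.1, w1.2) ∈ CP T L l pl ph := by
      refine ⟨⟨hw1x0, hw1b, hw1c, hw1d, hw1e,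
        hw1f, hw1x01⟩, ?_, ?_⟩
      · intro t ht; simp [hp1, hw1x0 t ht]
      · intro t ht
        have hcn := hcb t ht
        have hnn : 0 ≤ w1.1 t := (hw1x01 t ht).1
        exact ⟨mul_le_mul_of_nonneg_left hcn.1 hnn, mul_le_mul_of_nonneg_left hcn.2 hnn⟩
    have hmem2 : (p2, w2.1, w2.2) ∈ CP T L l pl ph := by
      refine ⟨⟨hw2x0, hw2b, hw2c, hw2d, hw2e,
        hw2f, hw2x01⟩, ?_, ?_⟩
      · intro t ht; simp [hp2, hw2x0 t ht]
      · intro t ht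
        have hcn := hcb t ht
        have hnn : 0 ≤ w2.1 t := (hw2x01 t ht).1
        exact ⟨mul_le_mul_of_nonneg_left hcn.1 hnn, mul_le_mul_of_nonneg_left hcn.2 hnn⟩
    have hpt : ∀ t, a * p1 t + b * p2 t = z.1 t := by
      intro t
      by_cases h : z.2.1 t = 0
      · have hzero : w1.1 t = 0 ∧ w2.1 t = 0 := by
          by_cases ht : t ∈ Finset.Icc 1 T
          · have h1 : 0 ≤ w1.1 t := (hw1x01 t ht).1
            have h2 : 0 ≤ w2.1 t := (hw2x01 t ht).1
            have := hxeq t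
            rw [h] at this
            constructor <;> nlinarith
          · exact ⟨hw1x0 t ht, hw2x0 t ht⟩
        simp [hp1, hp2, hzero.1, hzero.2, hpz t h]
      · have : a * p1 t + b * p2 t = (a * w1.1 t + b * w2.1 t) * c t := by
          simp [hp1, hp2]; ring
        rw [this, hxeq t]
        simp only [hc, h, if_false]
        field_simp
    have hseg : z ∈ openSegment ℝ (p1, w1.1, w1.2) (p2, w2.1, w2.2) := by
      refine ⟨a, b, ha, hb, hab, ?_⟩
      have h1 : a • p1 + b • p2 = z.1 := by funext t; exact hpt t
      have h2 : a • w1.1 + b • w2.1 = z.2.1 := by funext t; exact hxeq t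
      have h3 : a • w1.2 + b • w2.2 = z.2.2 := by funext t; exact hueq t
      ext t
      · exact hpt t
      · exact hxeq t
      · exact hueq t
    have he1 := hext hmem1 hmem2 hseg
    exact Prod.ext (congrArg (Prod.fst ∘ Prod.snd) he1) (congrArg (Prod.snd ∘ Prod.snd) he1)
  exact hint _ key
end

section
/- Let 0 ≤ p̲ ≤ p̄ and let C(p,x) on X = {(p,x) : x ∈ {0,1}, x·p̲ ≤ p ≤ x·p̄} be given by C(p,1) = max_k (a_k·p + b_k) + c (a convex piecewise-linear operating cost plus no-load cost) and C(0,0) = 0. Then the convex envelope of C over X is C**(p,x) = a_k·p + (c + b_k)·x when x > 0 and p/x ∈ I_k, and C**(0,0) = 0, where {I_k} is the partition of [p̲, p̄] on which each affine piece is active; equivalently C**(p,x) = x·C(p/x, 1) for x > 0 (the perspective of C(·,1)). -/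
/-- The convex envelope of a convex piecewise-linear cost (plus no-load cost `c`) over the
mixed-integer set `X = {(p,x) : x ∈ {0,1}, x·p̲ ≤ p ≤ x·p̄}` is the perspective function
`E(p,x) = x·C(p/x,1)` for `x > 0` and `E(0,0) = 0`; on the active region `I_k` it equals
`a_k·p + (c + b_k)·x`. -/
theorem stmt15 (K : Type) [Fintype K] [Nonempty K]
    (a b : K → ℝ) (c pl ph : ℝ) (hpl : 0 ≤ pl) (hph : pl ≤ ph)
    (I : K → Set ℝ) (hIcover : ⋃ k, I k = Set.Icc pl ph)
    (hIact : ∀ k, ∀ p ∈ I k, ∀ j, a j * p + b j ≤ a k * p + b k)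
    (X D : Set (ℝ × ℝ))
    (hX : X = {z | (z.2 = 0 ∨ z.2 = 1) ∧ z.2 * pl ≤ z.1 ∧ z.1 ≤ z.2 * ph})
    (hD : D = {z | z.2 ∈ Set.Icc (0:ℝ) 1 ∧ z.2 * pl ≤ z.1 ∧ z.1 ≤ z.2 * ph})
    (C E : ℝ × ℝ → ℝ)
    (hC : C = fun z => if z.2 = 0 then 0 else (⨆ k, a k * z.1 + b k) + c)
    (hE : E = fun z => if 0 < z.2 then z.2 * ((⨆ k, a k * (z.1 / z.2) + b k) + c) else 0) :
    (∀ z : ℝ × ℝ, 0 < z.2 → ∀ k, z.1 / z.2 ∈ I k → E z = a k * z.1 + (c + b k) * z.2) ∧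
      ConvexOn ℝ D E ∧ (∀ z ∈ X, E z ≤ C z) ∧
      ∀ φ, ConvexOn ℝ D φ → (∀ z ∈ X, φ z ≤ C z) → ∀ z ∈ D, φ z ≤ E z := by
  have hbdd : ∀ f : K → ℝ, BddAbove (Set.range f) := fun f =>
    (Set.finite_range f).bddAbove
  -- E equals the sup of linear functions for positive x
  have hform : ∀ p x : ℝ, 0 < x →
      x * ((⨆ k, a k * (p / x) + b k) + c) = ⨆ k, (a k * p + (c + b k) * x) := by
    intro p x hx
    obtain ⟨k0, hk0⟩ := Finite.exists_max (fun k => a k * (p / x) + b k)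
    have hS : (⨆ k, a k * (p / x) + b k) = a k0 * (p / x) + b k0 :=
      le_antisymm (ciSup_le hk0) (le_ciSup (hbdd fun k => a k * (p / x) + b k) k0)
    apply le_antisymm
    · rw [hS]
      have : x * (a k0 * (p / x) + b k0 + c) = a k0 * p + (c + b k0) * x := by
        field_simp; ring
      rw [this]
      exact le_ciSup (hbdd fun k => a k * p + (c + b k) * x) k0
    · apply ciSup_le
      intro k
      have h1 : a k * p + (c + b k) * x = x * ((a k * (p / x) + b k) + c) := by
        field_simp; ring
      rw [h1]
      have h2 : a k * (p / x) + b k ≤ ⨆ k, a k * (p / x) + b k :=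
        le_ciSup (hbdd fun j => a j * (p / x) + b j) k
      nlinarith
  set L : ℝ × ℝ → ℝ := fun z => ⨆ k, (a k * z.1 + (c + b k) * z.2) with hL
  have hEeq : ∀ z ∈ D, E z = L z := by
    intro z hz
    rw [hD] at hz
    obtain ⟨⟨h0, h1⟩, h2, h3⟩ := hz
    rcases lt_or_eq_of_le h0 with hx | hx
    · rw [hE]; simp only [if_pos hx]; exact hform z.1 z.2 hx
    · have hz1 : z.1 = 0 := by nlinarith
      rw [hE, hL]
      simp [← hx, hz1]
  have hDconv : Convex ℝ D := by
    rw [hD]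
    intro z hz w hw t s ht hs hts
    obtain ⟨⟨hz0, hz1⟩, hz2, hz3⟩ := hz
    obtain ⟨⟨hw0, hw1⟩, hw2, hw3⟩ := hw
    simp only [Set.mem_setOf_eq, Prod.smul_fst, Prod.smul_snd, Prod.fst_add, Prod.snd_add,
      smul_eq_mul, Set.mem_Icc]
    refine ⟨⟨by nlinarith, by nlinarith⟩, by nlinarith, by nlinarith⟩
  have hconv : ConvexOn ℝ D E := by
    refine ⟨hDconv, ?_⟩
    intro z hz w hw t s ht hs hts
    have hmem : t • z + s • w ∈ D := hDconv hz hw ht hs hts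
    rw [hEeq _ hmem, hEeq _ hz, hEeq _ hw, hL]
    apply ciSup_le
    intro k
    have h1 : a k * z.1 + (c + b k) * z.2 ≤ L z :=
      le_ciSup (hbdd fun j => a j * z.1 + (c + b j) * z.2) k
    have h2 : a k * w.1 + (c + b k) * w.2 ≤ L w :=
      le_ciSup (hbdd fun j => a j * w.1 + (c + b j) * w.2) k
    simp only [Prod.smul_fst, Prod.smul_snd, Prod.fst_add, Prod.snd_add, smul_eq_mul]
    nlinarith
  refine ⟨?_, hconv, ?_, ?_⟩
  · -- part 1
    intro z hx k hk
    have hS : (⨆ j, a j * (z.1 / z.2) + b j) = a k * (z.1 / z.2) + b k :=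
      le_antisymm (ciSup_le (hIact k _ hk)) (le_ciSup (hbdd fun j => a j * (z.1 / z.2) + b j) k)
    rw [hE]
    simp only [if_pos hx, hS]
    field_simp; ring
  · -- part 3
    intro z hz
    rw [hX] at hz
    obtain ⟨h01, h2, h3⟩ := hz
    rcases h01 with h | h
    · have hz1 : z.1 = 0 := by nlinarith
      rw [hE, hC]
      simp [h]
    · rw [hE, hC]
      simp [h]
  · -- part 4
    intro φ hφ hφC z hz
    have hzD := hz
    rw [hD] at hz
    obtain ⟨⟨h0, h1⟩, h2, h3⟩ := hz
    rcases lt_or_eq_of_le h0 with hx | hx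
    · set q := z.1 / z.2 with hq
      have hqmem : pl ≤ q ∧ q ≤ ph := by
        constructor
        · rw [hq, le_div_iff₀ hx]; linarith [h2]
        · rw [hq, div_le_iff₀ hx]; linarith [h3]
      have hA : ((0, 0) : ℝ × ℝ) ∈ D := by rw [hD]; simp
      have hB : ((q, 1) : ℝ × ℝ) ∈ D := by
        rw [hD]; simp [hqmem.1, hqmem.2]
      have hcomb : (1 - z.2) • ((0, 0) : ℝ × ℝ) + z.2 • ((q, 1) : ℝ × ℝ) = z := by
        have : z.2 * q = z.1 := by rw [hq]; field_simp
        ext <;> simp [this]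
      have hineq := hφ.2 hA hB (by linarith : (0:ℝ) ≤ 1 - z.2) (le_of_lt hx) (by ring)
      rw [hcomb] at hineq
      have hAX : ((0, 0) : ℝ × ℝ) ∈ X := by rw [hX]; simp
      have hBX : ((q, 1) : ℝ × ℝ) ∈ X := by rw [hX]; simp [hqmem.1, hqmem.2]
      have hCA : C (0, 0) = 0 := by rw [hC]; simp
      have hCB : C (q, 1) = (⨆ k, a k * q + b k) + c := by rw [hC]; simp
      have hφA := hφC _ hAX
      have hφB := hφC _ hBX
      rw [hCA] at hφA
      rw [hCB] at hφB
      rw [hE]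
      simp only [if_pos hx, smul_eq_mul] at *
      calc φ z ≤ (1 - z.2) * φ (0, 0) + z.2 * φ (q, 1) := hineq
        _ ≤ z.2 * ((⨆ k, a k * q + b k) + c) := by nlinarith
    · have hz1 : z.1 = 0 := by nlinarith
      have hzz : z = ((0, 0) : ℝ × ℝ) := by ext <;> simp [hz1, ← hx]
      have hAX : ((0, 0) : ℝ × ℝ) ∈ X := by rw [hX]; simp
      have := hφC _ hAX
      rw [hC] at this
      simp only at this
      rw [hE, hzz]
      simpa using this
end

section
/- Let D_2(1,1) = {(x₁,x₂,u₂) ∈ [0,1]² × ℝ : u₂ ≥ x₂ − x₁, u₂ ≥ 0, u₂ ≤ x₂, u₂ ≤ 1 − x₁}. Every point of D_2(1,1) is a convex combination of the integral points (0,0,0), (1,0,0), (0,1,1), (1,1,0) of D_2(1,1), and the convex weights can be chosen so that the weight on (0,1,1) equals u₂ and the weight assigned to points with shut-down w₂ = u₂ + x₁ − x₂ = 1 (namely (1,0,0)'s shut-down configuration) equals w₂. -/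
/-- Base case `T = 2`, `L = l = 1` of the integrality proof: every point of `D_2(1,1)` is a
convex combination of the integral points `(0,0,0)`, `(1,0,0)`, `(0,1,1)`, `(1,1,0)`, with
the weight on `(0,1,1)` equal to `u₂` and the weight on the shut-down point `(1,0,0)` equal
to `w₂ = u₂ + x₁ − x₂`. -/
theorem stmt17 (x1 x2 u2 : ℝ)
    (h1 : x1 ∈ Set.Icc (0:ℝ) 1) (h2 : x2 ∈ Set.Icc (0:ℝ) 1)
    (hu1 : x2 - x1 ≤ u2) (hu0 : 0 ≤ u2) (hu2 : u2 ≤ x2) (hu3 : u2 ≤ 1 - x1) :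
    ∃ l0 l1 l2 l3 : ℝ, 0 ≤ l0 ∧ 0 ≤ l1 ∧ 0 ≤ l2 ∧ 0 ≤ l3 ∧
      l0 + l1 + l2 + l3 = 1 ∧
      ((x1, x2, u2) : ℝ × ℝ × ℝ) =
        l0 • (((0:ℝ), (0:ℝ), (0:ℝ)) : ℝ × ℝ × ℝ) + l1 • (((1:ℝ), (0:ℝ), (0:ℝ)) : ℝ × ℝ × ℝ)
          + l2 • (((0:ℝ), (1:ℝ), (1:ℝ)) : ℝ × ℝ × ℝ)
          + l3 • (((1:ℝ), (1:ℝ), (0:ℝ)) : ℝ × ℝ × ℝ) ∧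
      l2 = u2 ∧ l1 = u2 + x1 - x2 := by
  refine ⟨1 - x1 - u2, u2 + x1 - x2, u2, x2 - u2, by linarith [h1.2], by linarith, hu0, by linarith, by ring, ?_, rfl, rfl⟩
  simp [Prod.ext_iff]
end
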